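/- Let (g,h,rho,psi) be a matched pair of 3-Lie algebras over a field k. Then the direct sum vector space g + h equipped with the bracket [(x1,a1),(x2,a2),(x3,a3)] = ([x1,x2,x3] + psi(a2,a3)x1 + psi(a3,a1)x2 + psi(a1,a2)x3, [a1,a2,a3] + rho(x2,x3)a1 + rho(x3,x1)a2 + rho(x1,x2)a3) is a 3-Lie algebra (called the bicrossed product g >< h). -/
import Mathlib


/-- A 3-Lie algebra over `k`: an alternating trilinear bracket satisfying the
fundamental (Jacobi/Filippov) identity. -/
structure ThreeLie (k : Type*) (g : Type*) [CommRing k] [AddCommGroup g] [Module k g] where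
  br : g →ₗ[k] g →ₗ[k] g →ₗ[k] g
  alt₁ : ∀ x y, br x x y = 0
  alt₂ : ∀ x y, br x y y = 0
  fund : ∀ x1 x2 y1 y2 y3,
    br x1 x2 (br y1 y2 y3) =
      br (br x1 x2 y1) y2 y3 + br y1 (br x1 x2 y2) y3 + br y1 y2 (br x1 x2 y3)

/-- A representation of a 3-Lie algebra `(g, L)` on a module `V`. -/
structure Rep3 (k : Type*) (g V : Type*) [CommRing k] [AddCommGroup g] [Module k g]
    [AddCommGroup V] [Module k V] (L : ThreeLie k g) where
  ρ : g →ₗ[k] g →ₗ[k] Module.End k V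
  skew : ∀ x, ρ x x = 0
  rep1 : ∀ x1 x2 x3 x4 v, ρ x1 x2 (ρ x3 x4 v) =
    ρ x3 x4 (ρ x1 x2 v) + ρ (L.br x1 x2 x3) x4 v + ρ x3 (L.br x1 x2 x4) v
  rep2 : ∀ x1 x2 x3 x4 v, ρ (L.br x1 x2 x3) x4 v =
    ρ x1 x2 (ρ x3 x4 v) + ρ x2 x3 (ρ x1 x4 v) + ρ x3 x1 (ρ x2 x4 v)

/-- A matched pair of 3-Lie algebras `(g, h, ρ, ψ)`. -/
structure MatchedPair (k : Type*) (g h : Type*) [CommRing k] [AddCommGroup g] [Module k g]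
    [AddCommGroup h] [Module k h] where
  Lg : ThreeLie k g
  Lh : ThreeLie k h
  ρ : Rep3 k g h Lg
  ψ : Rep3 k h g Lh
  mp1 : ∀ a4 a5 x1 x2 x3, ψ.ρ a4 a5 (Lg.br x1 x2 x3) =
    Lg.br (ψ.ρ a4 a5 x1) x2 x3 + Lg.br x1 (ψ.ρ a4 a5 x2) x3 + Lg.br x1 x2 (ψ.ρ a4 a5 x3)
  mp2 : ∀ x1 x2 x4 a3 a5, ψ.ρ (ρ.ρ x1 x2 a3) a5 x4 =
    ψ.ρ (ρ.ρ x1 x4 a5) a3 x2 - ψ.ρ (ρ.ρ x2 x4 a5) a3 x1 + Lg.br x1 x2 (ψ.ρ a3 a5 x4)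
  mp3 : ∀ a2 a3 x1 x4 x5, Lg.br (ψ.ρ a2 a3 x1) x4 x5 =
    ψ.ρ a2 a3 (Lg.br x1 x4 x5) + ψ.ρ (ρ.ρ x4 x5 a2) a3 x1 + ψ.ρ a2 (ρ.ρ x4 x5 a3) x1
  mp4 : ∀ x4 x5 a1 a2 a3, ρ.ρ x4 x5 (Lh.br a1 a2 a3) =
    Lh.br (ρ.ρ x4 x5 a1) a2 a3 + Lh.br a1 (ρ.ρ x4 x5 a2) a3 + Lh.br a1 a2 (ρ.ρ x4 x5 a3)
  mp5 : ∀ a1 a2 a4 x3 x5, ρ.ρ (ψ.ρ a1 a2 x3) x5 a4 =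
    ρ.ρ (ψ.ρ a1 a4 x5) x3 a2 - ρ.ρ (ψ.ρ a2 a4 x5) x3 a1 + Lh.br a1 a2 (ρ.ρ x3 x5 a4)
  mp6 : ∀ x2 x3 a1 a4 a5, Lh.br (ρ.ρ x2 x3 a1) a4 a5 =
    ρ.ρ x2 x3 (Lh.br a1 a4 a5) + ρ.ρ (ψ.ρ a4 a5 x2) x3 a1 + ρ.ρ x2 (ψ.ρ a4 a5 x3) a1

section MPRepSec

variable (k : Type*) (g h V W : Type*) [CommRing k]
  [AddCommGroup g] [Module k g] [AddCommGroup h] [Module k h]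
  [AddCommGroup V] [Module k V] [AddCommGroup W] [Module k W]

/-- The raw data of a representation of a matched pair of 3-Lie algebras. -/
structure MPRepData where
  ρV : g →ₗ[k] g →ₗ[k] Module.End k V
  ψV : h →ₗ[k] h →ₗ[k] Module.End k V
  ρW : g →ₗ[k] g →ₗ[k] Module.End k W
  ψW : h →ₗ[k] h →ₗ[k] Module.End k W
  A : V →ₗ[k] g →ₗ[k] h →ₗ[k] W
  B : W →ₗ[k] h →ₗ[k] g →ₗ[k] V

variable {k g h V W}

/-- A representation `(V, W, α, β)` of a matched pair of 3-Lie algebras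
`(g, h, ρ, ψ)` (Definition 2.3 of arXiv:2508.14044). -/
structure MPRep (M : MatchedPair k g h) where
  rV : Rep3 k g V M.Lg
  pV : Rep3 k h V M.Lh
  rW : Rep3 k g W M.Lg
  pW : Rep3 k h W M.Lh
  A : V →ₗ[k] g →ₗ[k] h →ₗ[k] W
  B : W →ₗ[k] h →ₗ[k] g →ₗ[k] V
  iden1 : ∀ a1 a2 x2 x3 v1, pV.ρ a1 a2 (rV.ρ x2 x3 v1) =
    rV.ρ (M.ψ.ρ a1 a2 x2) x3 v1 + rV.ρ x2 (M.ψ.ρ a1 a2 x3) v1 + rV.ρ x2 x3 (pV.ρ a1 a2 v1)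
  iden2 : ∀ a1 a2 x1 x3 v2, pV.ρ a1 a2 (rV.ρ x1 x3 v2) =
    rV.ρ (M.ψ.ρ a1 a2 x1) x3 v2 + rV.ρ x1 (M.ψ.ρ a1 a2 x3) v2 + rV.ρ x1 x3 (pV.ρ a1 a2 v2)
  iden3 : ∀ a1 a2 x1 x2 v3, pV.ρ a1 a2 (rV.ρ x1 x2 v3) =
    rV.ρ (M.ψ.ρ a1 a2 x1) x2 v3 + rV.ρ x1 (M.ψ.ρ a1 a2 x2) v3 + rV.ρ x1 x2 (pV.ρ a1 a2 v3)
  iden4 : ∀ w1 w2 a1 a2 x1 x2 x3,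
    B w1 a2 (M.Lg.br x1 x2 x3) - B w2 a1 (M.Lg.br x1 x2 x3) =
      rV.ρ x2 x3 (B w1 a2 x1 - B w2 a1 x1) + rV.ρ x1 x3 (B w1 a2 x2 - B w2 a1 x2)
      + rV.ρ x1 x2 (B w1 a2 x3 - B w2 a1 x3)
  iden5 : ∀ x2 x3 a1 a2 v1, rV.ρ x2 (M.ψ.ρ a1 a2 x3) v1 = pV.ρ (M.ρ.ρ x2 x3 a2) a1 v1
  iden6 : ∀ x1 x3 a1 a2 v2, rV.ρ x1 (M.ψ.ρ a1 a2 x3) v2 = pV.ρ (M.ρ.ρ x1 x3 a2) a1 v2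
  iden7 : ∀ x1 x2 a1 a2 v3, rV.ρ x1 x2 (pV.ρ a1 a2 v3) = pV.ρ (M.ρ.ρ x1 x2 a1) a2 v3
  iden8 : ∀ x1 x2 x3 a1 a2 v1 v2 v3 w1 w2,
    rV.ρ x1 x2 (B w1 a2 x3 - B w2 a1 x3) =
      B (rW.ρ x2 x3 w2 + A v2 x3 a2 - A v3 x1 a2) a1 x1 - B w1 (M.ρ.ρ x2 x3 a2) x1
      - B (rW.ρ x1 x3 w2 + A v1 x3 a2 - A v3 x1 a2) a1 x2 + B w1 (M.ρ.ρ x1 x3 a2) x2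
      + B (rW.ρ x1 x2 w1 + A v1 x2 a1 - A v2 x1 a1) a2 x3 - B w2 (M.ρ.ρ x1 x2 a1) x3
  iden9 : ∀ x2 x3 a1 a2 v1, rV.ρ x2 x3 (pV.ρ a1 a2 v1) =
    pV.ρ a1 a2 (rV.ρ x2 x3 v1) + pV.ρ (M.ρ.ρ x2 x3 a1) a2 v1 + pV.ρ a1 (M.ρ.ρ x2 x3 a2) v1
  iden10 : ∀ x1 x2 x3 a1 a2 v2 v3 w1 w2,
    rV.ρ x2 x3 (B w1 a2 x1 - B w2 a1 x1) =
      (B w1 a2 (M.Lg.br x1 x2 x3) - B w2 a1 (M.Lg.br x1 x2 x3))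
      - B w2 (M.ρ.ρ x2 x3 a1) x1 + B w1 (M.ρ.ρ x2 x3 a2) x1
      + B (rW.ρ x2 x3 w1 + A v2 x3 a1 - A v3 x2 a1) a2 x1
      - B (rW.ρ x2 x2 w2 + A v2 x3 a2 - A v3 x2 a2) a1 x1
  iden11 : ∀ a1 a2 x1 x3 v2, rV.ρ (M.ψ.ρ a1 a2 x1) x3 v2 = pV.ρ a1 a2 (rV.ρ x1 x3 v2)
  iden12 : ∀ a1 a2 x1 x2 v3, rV.ρ (M.ψ.ρ a1 a2 x1) x2 v3 = pV.ρ a1 a2 (rV.ρ x1 x2 v3)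
  iden13 : ∀ x1 x2 a2 a3 w1, rW.ρ x1 x2 (pW.ρ a2 a3 w1) =
    pW.ρ (M.ρ.ρ x1 x2 a2) a3 w1 + pW.ρ a2 (M.ρ.ρ x1 x2 a3) w1 + pW.ρ a2 a3 (rW.ρ x1 x2 w1)
  iden14 : ∀ x1 x2 a1 a3 w2, rW.ρ x1 x2 (pW.ρ a1 a3 w2) =
    pW.ρ (M.ρ.ρ x1 x2 a1) a3 w2 + pW.ρ a1 (M.ρ.ρ x1 x2 a3) w2 + pW.ρ a1 a3 (rW.ρ x1 x2 w2)
  iden15 : ∀ x1 x2 a1 a2 w3, rW.ρ x1 x2 (pW.ρ a1 a2 w3) =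
    pW.ρ (M.ρ.ρ x1 x2 a1) a2 w3 + pW.ρ a1 (M.ρ.ρ x1 x2 a2) w3 + pW.ρ a1 a2 (rW.ρ x1 x2 w3)
  iden16 : ∀ v1 v2 x1 x2 a1 a2 a3,
    A v1 x2 (M.Lh.br a1 a2 a3) - A v2 x1 (M.Lh.br a1 a2 a3) =
      pW.ρ a2 a3 (A v1 x2 a1 - A v2 x1 a1) + pW.ρ a1 a3 (A v1 x1 a2 + A v2 x2 a2)
      + pW.ρ a1 a2 (A v1 x2 a3 - A v2 x1 a3)
  iden17 : ∀ a2 a3 x1 x2 w1, pW.ρ a2 (M.ρ.ρ x1 x2 a3) w1 = rW.ρ (M.ψ.ρ a2 a3 x2) x1 w1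
  iden18 : ∀ a1 a3 x1 x2 w2, pW.ρ a1 (M.ρ.ρ x1 x2 a3) w2 = rW.ρ (M.ψ.ρ a1 a3 x2) x1 w2
  iden19 : ∀ a1 a2 x1 x2 w3, pW.ρ a1 a2 (rW.ρ x1 x2 w3) = rW.ρ (M.ψ.ρ a1 a2 x1) x2 w3
  iden20 : ∀ a1 a2 a3 x1 x2 v1 v2 w1 w2 w3,
    pW.ρ a1 a2 (A v1 x2 a3 - A v2 x1 a3) =
      A (pV.ρ a2 a3 v2 + B w2 a3 x2 - B w3 a1 x2) x1 a1 - A v1 (M.ψ.ρ a2 a3 x2) a1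
      - A (pV.ρ a1 a3 v2 + B w1 a3 x2 - B w3 a1 x2) x1 a2 + A v1 (M.ψ.ρ a1 a3 x2) a2
      + A (pV.ρ a1 a2 v1 + B w1 a2 x1 - B w2 a1 x1) x2 a3 - A v2 (M.ψ.ρ a1 a2 x1) a3
  iden21 : ∀ a2 a3 x1 x2 w1, pW.ρ a2 a3 (rW.ρ x1 x2 w1) =
    rW.ρ x1 x2 (pW.ρ a2 a3 w1) + rW.ρ (M.ψ.ρ a2 a3 x1) x2 w1 + rW.ρ x1 (M.ψ.ρ a2 a3 x2) w1
  iden22 : ∀ a1 a2 a3 x1 x2 v1 v2 w2 w3,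
    pW.ρ a2 a3 (A v1 x2 a1 - A v2 x1 a1) =
      (A v1 x2 (M.Lh.br a1 a2 a3) - A v2 x1 (M.Lh.br a1 a2 a3))
      - A v2 (M.ψ.ρ a2 a3 x1) a1 + A v1 (M.ψ.ρ a2 a3 x2) a1
      + A (pV.ρ a2 a3 v1 + B w2 a3 x1 - B w3 a2 x1) x2 a1
      - A (pV.ρ a2 a2 v2 + B w2 a3 x2 - B w3 a2 x2) x1 a1
  iden23 : ∀ x1 x2 a1 a3 w2, pW.ρ (M.ρ.ρ x1 x2 a1) a3 w2 = rW.ρ x1 x2 (pW.ρ a1 a3 w2)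
  iden24 : ∀ x1 x2 a1 a2 w3, pW.ρ (M.ρ.ρ x1 x2 a1) a2 w3 = rW.ρ x1 x2 (pW.ρ a1 a2 w3)

/-- Forget the axioms of a matched-pair representation. -/
def MPRep.toData {M : MatchedPair k g h} (R : MPRep (V := V) (W := W) M) :
    MPRepData k g h V W :=
  ⟨R.rV.ρ, R.pV.ρ, R.rW.ρ, R.pW.ρ, R.A, R.B⟩

end MPRepSec

/-- The adjoint representation data of a matched pair on itself. -/
def adjData {k g h : Type*} [CommRing k] [AddCommGroup g] [Module k g]
    [AddCommGroup h] [Module k h] (M : MatchedPair k g h) : MPRepData k g h g h :=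
  ⟨M.Lg.br, M.ψ.ρ, M.ρ.ρ, M.Lh.br, M.ρ.ρ, M.ψ.ρ⟩
section CochainSec

variable (k : Type*) (g h V W : Type*) [CommRing k]
  [AddCommGroup g] [Module k g] [AddCommGroup h] [Module k h]
  [AddCommGroup V] [Module k V] [AddCommGroup W] [Module k W]

/-- A 2-cochain `(ω, θ, ν, φ)` of a matched pair of 3-Lie algebras with
coefficients in a pair of modules `(V, W)`. -/
structure Cochain2 where
  ω : g →ₗ[k] g →ₗ[k] g →ₗ[k] V
  θ : h →ₗ[k] h →ₗ[k] h →ₗ[k] W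
  ν : g →ₗ[k] g →ₗ[k] h →ₗ[k] W
  φ : h →ₗ[k] h →ₗ[k] g →ₗ[k] V
  ω_alt₁ : ∀ x y, ω x x y = 0
  ω_alt₂ : ∀ x y, ω x y y = 0
  θ_alt₁ : ∀ a b, θ a a b = 0
  θ_alt₂ : ∀ a b, θ a b b = 0
  ν_skew : ∀ x, ν x x = 0
  φ_skew : ∀ a, φ a a = 0

variable {k g h V W}

instance : Sub (Cochain2 k g h V W) :=
  ⟨fun c d =>
    { ω := c.ω - d.ω
      θ := c.θ - d.θ
      ν := c.ν - d.ν
      φ := c.φ - d.φ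
      ω_alt₁ := by intro x y; simp [c.ω_alt₁, d.ω_alt₁]
      ω_alt₂ := by intro x y; simp [c.ω_alt₂, d.ω_alt₂]
      θ_alt₁ := by intro a b; simp [c.θ_alt₁, d.θ_alt₁]
      θ_alt₂ := by intro a b; simp [c.θ_alt₂, d.θ_alt₂]
      ν_skew := by intro x; simp [c.ν_skew, d.ν_skew]
      φ_skew := by intro a; simp [c.φ_skew, d.φ_skew] }⟩

/-- The eight 2-cocycle identities (2co-1)–(2co-8) of arXiv:2508.14044, with
coefficients in a representation (data) `R` of the matched pair `M`. -/
def IsCocycle2 (M : MatchedPair k g h) (R : MPRepData k g h V W)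
    (c : Cochain2 k g h V W) : Prop :=
  (∀ x1 x2 x3 x4 x5 : g,
    R.ρV x4 x5 (c.ω x1 x2 x3) + R.ρV x5 x3 (c.ω x1 x2 x4) + R.ρV x3 x4 (c.ω x1 x2 x5)
    + c.ω (M.Lg.br x1 x2 x3) x4 x5 + c.ω x3 (M.Lg.br x1 x2 x4) x5
    + c.ω x3 x4 (M.Lg.br x1 x2 x5)
    - R.ρV x1 x2 (c.ω x3 x4 x5) - c.ω x1 x2 (M.Lg.br x3 x4 x5) = 0) ∧
  (∀ (x1 x2 : g) (a1 a2 a3 : h),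
    R.ψW a2 a3 (c.ν x1 x2 a1) + R.ψW a3 a1 (c.ν x1 x2 a2) + R.ψW a1 a2 (c.ν x1 x2 a3)
    + c.θ (M.ρ.ρ x1 x2 a1) a2 a3 + c.θ a1 (M.ρ.ρ x1 x2 a2) a3 + c.θ a1 a2 (M.ρ.ρ x1 x2 a3)
    - R.ρW x1 x2 (c.θ a1 a2 a3) - c.ν x1 x2 (M.Lh.br a1 a2 a3) = 0) ∧
  (∀ (a1 a2 : h) (x1 x2 x3 : g),
    R.ρV x2 x3 (c.φ a1 a2 x1) + R.ρV x3 x1 (c.φ a1 a2 x2) + R.ρV x1 x2 (c.φ a1 a2 x3)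
    + c.ω (M.ψ.ρ a1 a2 x1) x2 x3 + c.ω x1 (M.ψ.ρ a1 a2 x2) x3 + c.ω x1 x2 (M.ψ.ρ a1 a2 x3)
    - R.ψV a1 a2 (c.ω x1 x2 x3) - c.φ a1 a2 (M.Lg.br x1 x2 x3) = 0) ∧
  (∀ (x1 x2 x3 : g) (a1 a2 : h),
    R.B (c.ν x1 x3 a2) a1 x2 + c.φ (M.ρ.ρ x1 x3 a2) a1 x2
    - R.B (c.ν x2 x3 a2) a1 x1 - c.φ (M.ρ.ρ x2 x3 a2) a1 x1
    + R.ρV x1 x2 (c.φ a1 a2 x3) + c.ω x1 x2 (M.ψ.ρ a1 a2 x3)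
    - R.B (c.ν x1 x2 a1) a2 x3 - c.φ (M.ρ.ρ x1 x2 a1) a2 x3 = 0) ∧
  (∀ (a1 a2 a3 : h) (x1 x2 : g),
    R.A (c.φ a1 a3 x2) x1 a2 + c.ν (M.ψ.ρ a1 a3 x2) x1 a2
    - R.A (c.φ a2 a3 x2) x1 a1 - c.ν (M.ψ.ρ a2 a3 x2) x1 a1
    + R.ψW a1 a2 (c.ν x1 x2 a3) + c.θ a1 a2 (M.ρ.ρ x1 x2 a3)
    - R.A (c.φ a1 a2 x1) x2 a3 - c.ν (M.ψ.ρ a1 a2 x1) x2 a3 = 0) ∧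
  (∀ (a1 a2 : h) (x1 x2 x3 : g),
    R.ψV a1 a2 (c.ω x1 x2 x3) + c.φ a1 a2 (M.Lg.br x1 x2 x3)
    + c.φ (M.ρ.ρ x2 x3 a1) a2 x1 + R.B (c.ν x2 x3 a1) a2 x1
    + c.φ a1 (M.ρ.ρ x2 x3 a2) x1 - R.B (c.ν x2 x3 a2) a1 x1
    - c.ω (M.ψ.ρ a1 a2 x1) x2 x3 - R.ρV x2 x3 (c.φ a1 a2 x1) = 0) ∧
  (∀ (x1 x2 : g) (a1 a2 a3 : h),
    R.ρW x1 x2 (c.θ a1 a2 a3) + c.ν x1 x2 (M.Lh.br a1 a2 a3)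
    + c.ν (M.ψ.ρ a2 a3 x1) x2 a1 + R.A (c.φ a2 a3 x1) x2 a1
    + c.ν x1 (M.ψ.ρ a2 a3 x2) a1 - R.A (c.φ a2 a3 x2) x1 a1
    - c.θ (M.ρ.ρ x1 x2 a1) a2 a3 - R.ψW a2 a3 (c.ν x1 x2 a1) = 0) ∧
  (∀ a1 a2 a3 a4 a5 : h,
    R.ψW a4 a5 (c.θ a1 a2 a3) + R.ψW a5 a3 (c.θ a1 a2 a4) + R.ψW a3 a4 (c.θ a1 a2 a5)
    + c.θ (M.Lh.br a1 a2 a3) a4 a5 + c.θ a3 (M.Lh.br a1 a2 a4) a5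
    + c.θ a3 a4 (M.Lh.br a1 a2 a5)
    - R.ψW a1 a2 (c.θ a3 a4 a5) - c.θ a1 a2 (M.Lh.br a3 a4 a5) = 0)

/-- `c` is the image under the differential `D₁` of the 1-cochain `(N1, N2)`. -/
def IsD1 (M : MatchedPair k g h) (R : MPRepData k g h V W)
    (N1 : g →ₗ[k] V) (N2 : h →ₗ[k] W) (c : Cochain2 k g h V W) : Prop :=
  (∀ x1 x2 x3, c.ω x1 x2 x3 =
    R.ρV x2 x3 (N1 x1) + R.ρV x3 x1 (N1 x2) + R.ρV x1 x2 (N1 x3) - N1 (M.Lg.br x1 x2 x3)) ∧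
  (∀ x1 x2 a, c.ν x1 x2 a =
    R.ρW x1 x2 (N2 a) - N2 (M.ρ.ρ x1 x2 a) + R.A (N1 x1) x2 a - R.A (N1 x2) x1 a) ∧
  (∀ a1 a2 x, c.φ a1 a2 x =
    R.ψV a1 a2 (N1 x) - N1 (M.ψ.ρ a1 a2 x) + R.B (N2 a1) a2 x - R.B (N2 a2) a1 x) ∧
  (∀ a1 a2 a3, c.θ a1 a2 a3 =
    R.ψW a2 a3 (N2 a1) + R.ψW a3 a1 (N2 a2) + R.ψW a1 a2 (N2 a3) - N2 (M.Lh.br a1 a2 a3))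

/-- `c` is a 2-coboundary. -/
def IsCoboundary (M : MatchedPair k g h) (R : MPRepData k g h V W)
    (c : Cochain2 k g h V W) : Prop :=
  ∃ (N1 : g →ₗ[k] V) (N2 : h →ₗ[k] W), IsD1 M R N1 N2 c

/-- Two 2-cochains are cohomologous if their difference is a 2-coboundary. -/
def Cohomologous (M : MatchedPair k g h) (R : MPRepData k g h V W)
    (c c' : Cochain2 k g h V W) : Prop :=
  IsCoboundary M R (c - c')

/-- The 1-cocycle conditions `D₁(ζ, η) = 0`. -/
def IsCocycle1 (M : MatchedPair k g h) (R : MPRepData k g h V W)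
    (ζ : g →ₗ[k] V) (η : h →ₗ[k] W) : Prop :=
  (∀ x1 x2 x3,
    R.ρV x2 x3 (ζ x1) + R.ρV x3 x1 (ζ x2) + R.ρV x1 x2 (ζ x3) = ζ (M.Lg.br x1 x2 x3)) ∧
  (∀ x1 x2 a,
    R.ρW x1 x2 (η a) - η (M.ρ.ρ x1 x2 a) + R.A (ζ x1) x2 a - R.A (ζ x2) x1 a = 0) ∧
  (∀ a1 a2 x,
    R.ψV a1 a2 (ζ x) - ζ (M.ψ.ρ a1 a2 x) + R.B (η a1) a2 x - R.B (η a2) a1 x = 0) ∧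
  (∀ a1 a2 a3,
    R.ψW a2 a3 (η a1) + R.ψW a3 a1 (η a2) + R.ψW a1 a2 (η a3) = η (M.Lh.br a1 a2 a3))

/-- The second cohomology group of a matched pair of 3-Lie algebras (as a quotient
of 2-cocycles by the relation of being cohomologous). -/
def H2MPL (M : MatchedPair k g h) (R : MPRepData k g h V W) :=
  Quot (fun c c' : {c : Cochain2 k g h V W // IsCocycle2 M R c} =>
    Cohomologous M R c.1 c'.1)

end CochainSec

section DualSec

variable {k : Type*} [CommRing k] {g : Type*} [AddCommGroup g] [Module k g]

/-- The `k[t]/(t²)`-module structure on `g[t]/(t²) = g × g`, where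
`(a + b t) • (x₀ + x₁ t) = a • x₀ + (a • x₁ + b • x₀) t`. -/
instance dualNumberModule : Module (DualNumber k) (g × g) where
  smul r x := (r.fst • x.1, r.fst • x.2 + r.snd • x.1)
  one_smul x := by
    show ((1 : DualNumber k).fst • x.1, (1 : DualNumber k).fst • x.2
      + (1 : DualNumber k).snd • x.1) = x
    simp
  mul_smul r s x := by
    show ((r * s).fst • x.1, (r * s).fst • x.2 + (r * s).snd • x.1)
      = (r.fst • (s.fst • x.1),
         r.fst • (s.fst • x.2 + s.snd • x.1) + r.snd • (s.fst • x.1))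
    ext
    · simp [TrivSqZeroExt.fst_mul, mul_smul]
    · simp only [TrivSqZeroExt.snd_mul, smul_eq_mul, MulOpposite.smul_eq_mul_unop,
        MulOpposite.unop_op, add_smul, mul_smul, TrivSqZeroExt.fst_mul, smul_add]
      abel
  smul_zero r := by
    show ((r : DualNumber k).fst • (0 : g), r.fst • (0 : g) + r.snd • (0 : g)) = 0
    simp
  smul_add r x y := by
    show (r.fst • (x.1 + y.1), r.fst • (x.2 + y.2) + r.snd • (x.1 + y.1))
      = ((r.fst • x.1, r.fst • x.2 + r.snd • x.1)
        + (r.fst • y.1, r.fst • y.2 + r.snd • y.1))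
    ext <;> (simp [smul_add]; try abel)
  add_smul r s x := by
    show ((r + s).fst • x.1, (r + s).fst • x.2 + (r + s).snd • x.1)
      = ((r.fst • x.1, r.fst • x.2 + r.snd • x.1)
        + (s.fst • x.1, s.fst • x.2 + s.snd • x.1))
    ext <;> (simp [add_smul]; try abel)
  zero_smul x := by
    show ((0 : DualNumber k).fst • x.1, (0 : DualNumber k).fst • x.2
      + (0 : DualNumber k).snd • x.1) = 0
    simp

end DualSec

section DeformSec

variable {k g h : Type*} [CommRing k] [AddCommGroup g] [Module k g]
  [AddCommGroup h] [Module k h]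

/-- The `t`-linear extension of the deformed bracket `[·,·,·] + t ω` on `g[t]/(t²)`. -/
def defBrG (M : MatchedPair k g h) (c : Cochain2 k g h g h) :
    g × g → g × g → g × g → g × g := fun X Y Z =>
  (M.Lg.br X.1 Y.1 Z.1,
   c.ω X.1 Y.1 Z.1 + M.Lg.br X.2 Y.1 Z.1 + M.Lg.br X.1 Y.2 Z.1 + M.Lg.br X.1 Y.1 Z.2)

/-- The `t`-linear extension of the deformed bracket `[·,·,·] + t θ` on `h[t]/(t²)`. -/
def defBrH (M : MatchedPair k g h) (c : Cochain2 k g h g h) :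
    h × h → h × h → h × h → h × h := fun A B C =>
  (M.Lh.br A.1 B.1 C.1,
   c.θ A.1 B.1 C.1 + M.Lh.br A.2 B.1 C.1 + M.Lh.br A.1 B.2 C.1 + M.Lh.br A.1 B.1 C.2)

/-- The `t`-linear extension of the deformed action `ρ + t ν`. -/
def defRho (M : MatchedPair k g h) (c : Cochain2 k g h g h) :
    g × g → g × g → h × h → h × h := fun X Y A =>
  (M.ρ.ρ X.1 Y.1 A.1,
   c.ν X.1 Y.1 A.1 + M.ρ.ρ X.2 Y.1 A.1 + M.ρ.ρ X.1 Y.2 A.1 + M.ρ.ρ X.1 Y.1 A.2)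

/-- The `t`-linear extension of the deformed action `ψ + t φ`. -/
def defPsi (M : MatchedPair k g h) (c : Cochain2 k g h g h) :
    h × h → h × h → g × g → g × g := fun A B X =>
  (M.ψ.ρ A.1 B.1 X.1,
   c.φ A.1 B.1 X.1 + M.ψ.ρ A.2 B.1 X.1 + M.ψ.ρ A.1 B.2 X.1 + M.ψ.ρ A.1 B.1 X.2)

/-- `(ω, θ, ν, φ)` is an infinitesimal deformation of the matched pair `M`: the
`t`-linear extensions of the deformed structure maps make
`(g[t]/(t²), h[t]/(t²))` into a matched pair of 3-Lie algebras over `k[t]/(t²)`. -/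
def IsInfDeformation (M : MatchedPair k g h) (c : Cochain2 k g h g h) : Prop :=
  ∃ Mt : MatchedPair (DualNumber k) (g × g) (h × h),
    (∀ X Y Z, Mt.Lg.br X Y Z = defBrG M c X Y Z) ∧
    (∀ A B C, Mt.Lh.br A B C = defBrH M c A B C) ∧
    (∀ X Y A, Mt.ρ.ρ X Y A = defRho M c X Y A) ∧
    (∀ A B X, Mt.ψ.ρ A B X = defPsi M c A B X)

/-- The map `id + t f` on `g[t]/(t²)`. -/
def tMap (f : g →ₗ[k] g) : g × g → g × g := fun p => (p.1, p.2 + f p.1)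

/-- The pair `(id_g + t f, id_h + t g')` is a morphism of matched pairs over
`k[t]/(t²)` from the deformation `c` to the deformation `c'`. -/
def IsDeformMorphism (M : MatchedPair k g h) (c c' : Cochain2 k g h g h)
    (f : g →ₗ[k] g) (g' : h →ₗ[k] h) : Prop :=
  (∀ X Y Z, tMap f (defBrG M c X Y Z) = defBrG M c' (tMap f X) (tMap f Y) (tMap f Z)) ∧
  (∀ A B C, tMap g' (defBrH M c A B C) = defBrH M c' (tMap g' A) (tMap g' B) (tMap g' C)) ∧
  (∀ X Y A, tMap g' (defRho M c X Y A) = defRho M c' (tMap f X) (tMap f Y) (tMap g' A)) ∧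
  (∀ A B X, tMap f (defPsi M c A B X) = defPsi M c' (tMap g' A) (tMap g' B) (tMap f X))

/-- Equivalence of infinitesimal deformations. -/
def DeformEquiv (M : MatchedPair k g h) (c c' : Cochain2 k g h g h) : Prop :=
  ∃ (f : g →ₗ[k] g) (g' : h →ₗ[k] h), IsDeformMorphism M c c' f g'

end DeformSec

section ExtSec

variable (k : Type*) (g h V W ghat hhat : Type*) [CommRing k]
  [AddCommGroup g] [Module k g] [AddCommGroup h] [Module k h]
  [AddCommGroup V] [Module k V] [AddCommGroup W] [Module k W]
  [AddCommGroup ghat] [Module k ghat] [AddCommGroup hhat] [Module k hhat]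

/-- An abelian extension `0 → V ⋈ W → ĝ ⋈ ĥ → g ⋈ h → 0` of a matched pair of
3-Lie algebras `M` by the pair of modules `(V, W)` (with trivial structure). -/
structure AbelianExt (M : MatchedPair k g h) where
  Mhat : MatchedPair k ghat hhat
  i1 : V →ₗ[k] ghat
  i2 : W →ₗ[k] hhat
  j1 : ghat →ₗ[k] g
  j2 : hhat →ₗ[k] h
  i1_br : ∀ v1 v2 v3, Mhat.Lg.br (i1 v1) (i1 v2) (i1 v3) = 0
  i2_br : ∀ w1 w2 w3, Mhat.Lh.br (i2 w1) (i2 w2) (i2 w3) = 0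
  i_rho : ∀ v1 v2 w, Mhat.ρ.ρ (i1 v1) (i1 v2) (i2 w) = 0
  i_psi : ∀ w1 w2 v, Mhat.ψ.ρ (i2 w1) (i2 w2) (i1 v) = 0
  j1_br : ∀ X Y Z, j1 (Mhat.Lg.br X Y Z) = M.Lg.br (j1 X) (j1 Y) (j1 Z)
  j2_br : ∀ A B C, j2 (Mhat.Lh.br A B C) = M.Lh.br (j2 A) (j2 B) (j2 C)
  j_rho : ∀ X Y A, j2 (Mhat.ρ.ρ X Y A) = M.ρ.ρ (j1 X) (j1 Y) (j2 A)
  j_psi : ∀ A B X, j1 (Mhat.ψ.ρ A B X) = M.ψ.ρ (j2 A) (j2 B) (j1 X)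
  i1_inj : Function.Injective i1
  i2_inj : Function.Injective i2
  j1_surj : Function.Surjective j1
  j2_surj : Function.Surjective j2
  exact1 : ∀ X, j1 X = 0 ↔ ∃ v, i1 v = X
  exact2 : ∀ A, j2 A = 0 ↔ ∃ w, i2 w = A

variable {k g h V W ghat hhat}
variable {M : MatchedPair k g h}

/-- `(s1, s2)` is a section of `(j1, j2)`. -/
def IsSection (E : AbelianExt k g h V W ghat hhat M)
    (s1 : g →ₗ[k] ghat) (s2 : h →ₗ[k] hhat) : Prop :=
  (∀ x, E.j1 (s1 x) = x) ∧ (∀ a, E.j2 (s2 a) = a)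

/-- The representation data `R` on `(V, W)` is the one induced on the abelian
extension `E` (via any section, transported along the injections `i1, i2`). -/
def IsInducedRep (E : AbelianExt k g h V W ghat hhat M)
    (R : MPRepData k g h V W) : Prop :=
  ∀ s1 s2, IsSection E s1 s2 →
    (∀ x1 x2 v, E.i1 (R.ρV x1 x2 v) = E.Mhat.Lg.br (s1 x1) (s1 x2) (E.i1 v)) ∧
    (∀ x1 x2 w, E.i2 (R.ρW x1 x2 w) = E.Mhat.ρ.ρ (s1 x1) (s1 x2) (E.i2 w)) ∧
    (∀ a1 a2 v, E.i1 (R.ψV a1 a2 v) = E.Mhat.ψ.ρ (s2 a1) (s2 a2) (E.i1 v)) ∧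
    (∀ a1 a2 w, E.i2 (R.ψW a1 a2 w) = E.Mhat.Lh.br (s2 a1) (s2 a2) (E.i2 w)) ∧
    (∀ v x a, E.i2 (R.A v x a) = E.Mhat.ρ.ρ (E.i1 v) (s1 x) (s2 a)) ∧
    (∀ w a x, E.i1 (R.B w a x) = E.Mhat.ψ.ρ (E.i2 w) (s2 a) (s1 x))

/-- `c` is the 2-cocycle associated to the abelian extension `E` and the
section `(s1, s2)`. -/
def IsExtCocycle (E : AbelianExt k g h V W ghat hhat M)
    (s1 : g →ₗ[k] ghat) (s2 : h →ₗ[k] hhat) (c : Cochain2 k g h V W) : Prop :=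
  (∀ x1 x2 x3, E.i1 (c.ω x1 x2 x3) =
    E.Mhat.Lg.br (s1 x1) (s1 x2) (s1 x3) - s1 (M.Lg.br x1 x2 x3)) ∧
  (∀ a1 a2 a3, E.i2 (c.θ a1 a2 a3) =
    E.Mhat.Lh.br (s2 a1) (s2 a2) (s2 a3) - s2 (M.Lh.br a1 a2 a3)) ∧
  (∀ x1 x2 a, E.i2 (c.ν x1 x2 a) =
    E.Mhat.ρ.ρ (s1 x1) (s1 x2) (s2 a) - s2 (M.ρ.ρ x1 x2 a)) ∧
  (∀ a1 a2 x, E.i1 (c.φ a1 a2 x) =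
    E.Mhat.ψ.ρ (s2 a1) (s2 a2) (s1 x) - s1 (M.ψ.ρ a1 a2 x))

end ExtSec

section ExtIsoSec

variable {k g h V W ghat hhat ghat' hhat' : Type*} [CommRing k]
  [AddCommGroup g] [Module k g] [AddCommGroup h] [Module k h]
  [AddCommGroup V] [Module k V] [AddCommGroup W] [Module k W]
  [AddCommGroup ghat] [Module k ghat] [AddCommGroup hhat] [Module k hhat]
  [AddCommGroup ghat'] [Module k ghat'] [AddCommGroup hhat'] [Module k hhat']
  {M : MatchedPair k g h}

/-- `(f, gm)` is an isomorphism of abelian extensions from `E` to `E'`. -/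
def IsExtIso (E : AbelianExt k g h V W ghat hhat M)
    (E' : AbelianExt k g h V W ghat' hhat' M)
    (f : ghat →ₗ[k] ghat') (gm : hhat →ₗ[k] hhat') : Prop :=
  Function.Bijective f ∧ Function.Bijective gm ∧
  (∀ X Y Z, f (E.Mhat.Lg.br X Y Z) = E'.Mhat.Lg.br (f X) (f Y) (f Z)) ∧
  (∀ A B C, gm (E.Mhat.Lh.br A B C) = E'.Mhat.Lh.br (gm A) (gm B) (gm C)) ∧
  (∀ X Y A, gm (E.Mhat.ρ.ρ X Y A) = E'.Mhat.ρ.ρ (f X) (f Y) (gm A)) ∧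
  (∀ A B X, f (E.Mhat.ψ.ρ A B X) = E'.Mhat.ψ.ρ (gm A) (gm B) (f X)) ∧
  (∀ v, f (E.i1 v) = E'.i1 v) ∧ (∀ w, gm (E.i2 w) = E'.i2 w) ∧
  (∀ X, E'.j1 (f X) = E.j1 X) ∧ (∀ A, E'.j2 (gm A) = E.j2 A)

end ExtIsoSec

section AutSec

variable {k g h V W ghat hhat : Type*} [CommRing k]
  [AddCommGroup g] [Module k g] [AddCommGroup h] [Module k h]
  [AddCommGroup V] [Module k V] [AddCommGroup W] [Module k W]
  [AddCommGroup ghat] [Module k ghat] [AddCommGroup hhat] [Module k hhat]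

/-- `(f, gm)` is an automorphism of the matched pair `M` (as a pair of linear
equivalences preserving the brackets and actions). -/
def IsMPAut (M : MatchedPair k g h) (f : g ≃ₗ[k] g) (gm : h ≃ₗ[k] h) : Prop :=
  (∀ x y z, f (M.Lg.br x y z) = M.Lg.br (f x) (f y) (f z)) ∧
  (∀ a b c, gm (M.Lh.br a b c) = M.Lh.br (gm a) (gm b) (gm c)) ∧
  (∀ x y a, gm (M.ρ.ρ x y a) = M.ρ.ρ (f x) (f y) (gm a)) ∧
  (∀ a b x, f (M.ψ.ρ a b x) = M.ψ.ρ (gm a) (gm b) (f x))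

/-- A pair of (not necessarily invertible a priori) linear maps is an
automorphism of the matched pair `M`. -/
def IsMPAutMap (M : MatchedPair k g h) (f : g →ₗ[k] g) (gm : h →ₗ[k] h) : Prop :=
  Function.Bijective f ∧ Function.Bijective gm ∧
  (∀ x y z, f (M.Lg.br x y z) = M.Lg.br (f x) (f y) (f z)) ∧
  (∀ a b c, gm (M.Lh.br a b c) = M.Lh.br (gm a) (gm b) (gm c)) ∧
  (∀ x y a, gm (M.ρ.ρ x y a) = M.ρ.ρ (f x) (f y) (gm a)) ∧
  (∀ a b x, f (M.ψ.ρ a b x) = M.ψ.ρ (gm a) (gm b) (f x))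

variable {M : MatchedPair k g h}

/-- The pair `(α, β) = ((α1, α2), (β1, β2))` is inducible: it is the image under
`Φ` of an automorphism `(γ1, γ2)` of the extension preserving `(V, W)`. -/
def Inducible (E : AbelianExt k g h V W ghat hhat M)
    (s1 : g →ₗ[k] ghat) (s2 : h →ₗ[k] hhat)
    (α1 : g ≃ₗ[k] g) (α2 : h ≃ₗ[k] h) (β1 : V ≃ₗ[k] V) (β2 : W ≃ₗ[k] W) : Prop :=
  ∃ (γ1 : ghat ≃ₗ[k] ghat) (γ2 : hhat ≃ₗ[k] hhat),
    IsMPAut E.Mhat γ1 γ2 ∧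
    (∀ v, γ1 (E.i1 v) = E.i1 (β1 v)) ∧ (∀ w, γ2 (E.i2 w) = E.i2 (β2 w)) ∧
    (∀ x, E.j1 (γ1 (s1 x)) = α1 x) ∧ (∀ a, E.j2 (γ2 (s2 a)) = α2 a)

/-- The conditions (Iam1)–(Iam4) of Theorem 5.2 of arXiv:2508.14044 on the pair
of linear maps `(ζ, η)`. -/
def IamCond (M : MatchedPair k g h) (R : MPRepData k g h V W)
    (c : Cochain2 k g h V W)
    (α1 : g ≃ₗ[k] g) (α2 : h ≃ₗ[k] h) (β1 : V ≃ₗ[k] V) (β2 : W ≃ₗ[k] W)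
    (ζ : g →ₗ[k] V) (η : h →ₗ[k] W) : Prop :=
  (∀ x1 x2 x3, β1 (c.ω x1 x2 x3) - c.ω (α1 x1) (α1 x2) (α1 x3) =
      R.ρV (α1 x2) (α1 x3) (ζ x1) + R.ρV (α1 x3) (α1 x1) (ζ x2)
      + R.ρV (α1 x1) (α1 x2) (ζ x3) - ζ (M.Lg.br x1 x2 x3)) ∧
  (∀ a1 a2 a3, β2 (c.θ a1 a2 a3) - c.θ (α2 a1) (α2 a2) (α2 a3) =
      R.ψW (α2 a2) (α2 a3) (η a1) + R.ψW (α2 a3) (α2 a1) (η a2)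
      + R.ψW (α2 a1) (α2 a2) (η a3) - η (M.Lh.br a1 a2 a3)) ∧
  (∀ x1 x2 a, β2 (c.ν x1 x2 a) - c.ν (α1 x1) (α1 x2) (α2 a) =
      R.ρW (α1 x1) (α1 x2) (η a) - η (M.ρ.ρ x1 x2 a)
      + R.A (ζ x1) (α1 x2) (α2 a) - R.A (ζ x2) (α1 x1) (α2 a)) ∧
  (∀ a1 a2 x, β1 (c.φ a1 a2 x) - c.φ (α2 a1) (α2 a2) (α1 x) =
      R.ψV (α2 a1) (α2 a2) (ζ x) - ζ (M.ψ.ρ a1 a2 x)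
      + R.B (η a1) (α2 a2) (α1 x) - R.B (η a2) (α2 a1) (α1 x))

/-- The subgroup `C` of compatible pairs of automorphisms. -/
def InC (M : MatchedPair k g h) (R : MPRepData k g h V W) (c : Cochain2 k g h V W)
    (α1 : g ≃ₗ[k] g) (α2 : h ≃ₗ[k] h) (β1 : V ≃ₗ[k] V) (β2 : W ≃ₗ[k] W) : Prop :=
  ∃ (ζ : g →ₗ[k] V) (η : h →ₗ[k] W), IamCond M R c α1 α2 β1 β2 ζ η

/-- `c'` is the transform `(ω, θ, ν, φ)_{(α,β)}` of the 2-cochain `c` under the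
pair of automorphisms `(α, β)`. -/
def IsTransformed (c : Cochain2 k g h V W)
    (α1 : g ≃ₗ[k] g) (α2 : h ≃ₗ[k] h) (β1 : V ≃ₗ[k] V) (β2 : W ≃ₗ[k] W)
    (c' : Cochain2 k g h V W) : Prop :=
  (∀ x1 x2 x3, c'.ω x1 x2 x3 = β1 (c.ω (α1.symm x1) (α1.symm x2) (α1.symm x3))) ∧
  (∀ a1 a2 a3, c'.θ a1 a2 a3 = β2 (c.θ (α2.symm a1) (α2.symm a2) (α2.symm a3))) ∧
  (∀ x1 x2 a, c'.ν x1 x2 a = β2 (c.ν (α1.symm x1) (α1.symm x2) (α2.symm a))) ∧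
  (∀ a1 a2 x, c'.φ a1 a2 x = β1 (c.φ (α2.symm a1) (α2.symm a2) (α1.symm x)))

end AutSec

/-- The class of a 2-cocycle in the second cohomology group. -/
def H2MPL.mk {k g h V W : Type*} [CommRing k]
    [AddCommGroup g] [Module k g] [AddCommGroup h] [Module k h]
    [AddCommGroup V] [Module k V] [AddCommGroup W] [Module k W]
    (M : MatchedPair k g h) (R : MPRepData k g h V W)
    (c : {c : Cochain2 k g h V W // IsCocycle2 M R c}) : H2MPL M R :=
  Quot.mk _ c

section BicrossAux

variable {k g h : Type*} [CommRing k] [AddCommGroup g] [Module k g]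
  [AddCommGroup h] [Module k h]

lemma Rep3.skew_apply' {V : Type*} [AddCommGroup V] [Module k V] {L : ThreeLie k g}
    (R : Rep3 k g V L) (x : g) (v : V) : R.ρ x x v = 0 := by
  rw [R.skew]; rfl

lemma Rep3.skew'' {V : Type*} [AddCommGroup V] [Module k V] {L : ThreeLie k g}
    (R : Rep3 k g V L) (x y : g) (v : V) : R.ρ x y v = - R.ρ y x v := by
  have h : R.ρ (x + y) (x + y) v = 0 := R.skew_apply' _ _
  simp only [map_add, LinearMap.add_apply, R.skew_apply'] at h
  rw [zero_add, add_zero] at h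
  exact eq_neg_of_add_eq_zero_right h

lemma ThreeLie.swap12 (L : ThreeLie k g) (x y z : g) : L.br x y z = - L.br y x z := by
  have h : L.br (x + y) (x + y) z = 0 := L.alt₁ _ _
  simp only [map_add, LinearMap.add_apply, L.alt₁] at h
  rw [zero_add, add_zero] at h
  exact eq_neg_of_add_eq_zero_right h

lemma ThreeLie.swap23 (L : ThreeLie k g) (x y z : g) : L.br x y z = - L.br x z y := by
  have h : L.br x (y + z) (y + z) = 0 := L.alt₂ _ _
  simp only [map_add, LinearMap.add_apply, L.alt₂] at h
  rw [zero_add, add_zero] at h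
  exact eq_neg_of_add_eq_zero_right h

lemma ThreeLie.cyc (L : ThreeLie k g) (x y z : g) : L.br x y z = L.br y z x := by
  rw [L.swap12 x y z, L.swap23 y x z, neg_neg]

/-- `g`-component of the bicrossed-product bracket. -/
def Bg (M : MatchedPair k g h) (x1 : g) (a1 : h) (x2 : g) (a2 : h) (x3 : g) (a3 : h) : g :=
  M.Lg.br x1 x2 x3 + M.ψ.ρ a2 a3 x1 + M.ψ.ρ a3 a1 x2 + M.ψ.ρ a1 a2 x3

/-- `h`-component of the bicrossed-product bracket. -/
def Bh (M : MatchedPair k g h) (x1 : g) (a1 : h) (x2 : g) (a2 : h) (x3 : g) (a3 : h) : h :=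
  M.Lh.br a1 a2 a3 + M.ρ.ρ x2 x3 a1 + M.ρ.ρ x3 x1 a2 + M.ρ.ρ x1 x2 a3

/-- Swap the roles of `g` and `h` in a matched pair. -/
def MatchedPair.swap (M : MatchedPair k g h) : MatchedPair k h g :=
  ⟨M.Lh, M.Lg, M.ψ, M.ρ, M.mp4, M.mp5, M.mp6, M.mp1, M.mp2, M.mp3⟩

-- sign helpers
lemma psi_psi_neg (M : MatchedPair k g h) (c d a b : h) (v : g) :
    M.ψ.ρ c d (M.ψ.ρ a b v) = - M.ψ.ρ c d (M.ψ.ρ b a v) := by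
  rw [M.ψ.skew'' a b v, map_neg]

lemma br_psi_neg (M : MatchedPair k g h) (u w : g) (a b : h) (v : g) :
    M.Lg.br u w (M.ψ.ρ a b v) = - M.Lg.br u w (M.ψ.ρ b a v) := by
  rw [M.ψ.skew'' a b v, map_neg]

lemma rho_arg1_neg (M : MatchedPair k g h) (x y : g) (a c : h) (v : g) :
    M.ψ.ρ (M.ρ.ρ x y a) c v = - M.ψ.ρ (M.ρ.ρ y x a) c v := by
  rw [M.ρ.skew'' x y a, map_neg, LinearMap.neg_apply, LinearMap.neg_apply]

lemma rho_swap_both (M : MatchedPair k g h) (x y : g) (a c : h) (v : g) :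
    M.ψ.ρ (M.ρ.ρ x y a) c v = M.ψ.ρ c (M.ρ.ρ y x a) v := by
  rw [M.ψ.skew'' (M.ρ.ρ x y a) c v, M.ρ.skew'' x y a, map_neg, LinearMap.neg_apply,
    neg_neg]

set_option maxHeartbeats 2000000 in
lemma fundG (M : MatchedPair k g h) (x1 x2 y1 y2 y3 : g) (a1 a2 b1 b2 b3 : h) :
    Bg M x1 a1 x2 a2 (Bg M y1 b1 y2 b2 y3 b3) (Bh M y1 b1 y2 b2 y3 b3) =
      Bg M (Bg M x1 a1 x2 a2 y1 b1) (Bh M x1 a1 x2 a2 y1 b1) y2 b2 y3 b3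
      + Bg M y1 b1 (Bg M x1 a1 x2 a2 y2 b2) (Bh M x1 a1 x2 a2 y2 b2) y3 b3
      + Bg M y1 b1 y2 b2 (Bg M x1 a1 x2 a2 y3 b3) (Bh M x1 a1 x2 a2 y3 b3) := by
  have hL1 := M.Lg.fund x1 x2 y1 y2 y3
  have hL13 := M.mp1 a1 a2 y1 y2 y3
  have hL9 := M.ψ.rep2 b1 b2 b3 a1 x2
  have hL14 := M.ψ.rep1 a1 a2 b2 b3 y1
  have hL15 := M.ψ.rep1 a1 a2 b3 b1 y2
  have hL16 := M.ψ.rep1 a1 a2 b1 b2 y3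
  have hL5 : M.ψ.ρ a2 (M.Lh.br b1 b2 b3) x1 =
      M.ψ.ρ b1 b2 (M.ψ.ρ a2 b3 x1) + M.ψ.ρ b2 b3 (M.ψ.ρ a2 b1 x1)
      + M.ψ.ρ b3 b1 (M.ψ.ρ a2 b2 x1) := by
    have h := M.ψ.rep2 b1 b2 b3 a2 x1
    have e0 := M.ψ.skew'' a2 (M.Lh.br b1 b2 b3) x1
    have e1 := psi_psi_neg M b1 b2 b3 a2 x1
    have e2 := psi_psi_neg M b2 b3 b1 a2 x1
    have e3 := psi_psi_neg M b3 b1 b2 a2 x1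
    linear_combination (norm := module) e0 - h - e1 - e2 - e3
  have hL2 : M.Lg.br x1 x2 (M.ψ.ρ b2 b3 y1) =
      M.ψ.ρ b2 b3 (M.Lg.br x1 x2 y1) + M.ψ.ρ (M.ρ.ρ x1 x2 b2) b3 y1
      + M.ψ.ρ b2 (M.ρ.ρ x1 x2 b3) y1 := by
    have h := M.mp3 b2 b3 y1 x1 x2
    have c1 := (M.Lg.cyc (M.ψ.ρ b2 b3 y1) x1 x2).symm
    have c2 : M.ψ.ρ b2 b3 (M.Lg.br y1 x1 x2) = M.ψ.ρ b2 b3 (M.Lg.br x1 x2 y1) := by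
      rw [M.Lg.cyc y1 x1 x2]
    linear_combination (norm := module) c1 + h + c2
  have hL3 : M.Lg.br x1 x2 (M.ψ.ρ b3 b1 y2) =
      M.ψ.ρ b3 b1 (M.Lg.br x1 x2 y2) + M.ψ.ρ (M.ρ.ρ x1 x2 b3) b1 y2
      + M.ψ.ρ b3 (M.ρ.ρ x1 x2 b1) y2 := by
    have h := M.mp3 b3 b1 y2 x1 x2
    have c1 := (M.Lg.cyc (M.ψ.ρ b3 b1 y2) x1 x2).symm
    have c2 : M.ψ.ρ b3 b1 (M.Lg.br y2 x1 x2) = M.ψ.ρ b3 b1 (M.Lg.br x1 x2 y2) := by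
      rw [M.Lg.cyc y2 x1 x2]
    linear_combination (norm := module) c1 + h + c2
  have hL4 : M.Lg.br x1 x2 (M.ψ.ρ b1 b2 y3) =
      M.ψ.ρ b1 b2 (M.Lg.br x1 x2 y3) + M.ψ.ρ (M.ρ.ρ x1 x2 b1) b2 y3
      + M.ψ.ρ b1 (M.ρ.ρ x1 x2 b2) y3 := by
    have h := M.mp3 b1 b2 y3 x1 x2
    have c1 := (M.Lg.cyc (M.ψ.ρ b1 b2 y3) x1 x2).symm
    have c2 : M.ψ.ρ b1 b2 (M.Lg.br y3 x1 x2) = M.ψ.ρ b1 b2 (M.Lg.br x1 x2 y3) := by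
      rw [M.Lg.cyc y3 x1 x2]
    linear_combination (norm := module) c1 + h + c2
  have hL10 : M.ψ.ρ (M.ρ.ρ y2 y3 b1) a1 x2 =
      M.Lg.br (M.ψ.ρ b1 a1 x2) y2 y3 + M.ψ.ρ b1 (M.ρ.ρ x2 y2 a1) y3
      + M.ψ.ρ (M.ρ.ρ x2 y3 a1) b1 y2 := by
    have h := M.mp2 y2 y3 x2 b1 a1
    have q1 := rho_swap_both M y2 x2 a1 b1 y3
    have q2 := rho_arg1_neg M y3 x2 a1 b1 y2
    have q3 := (M.Lg.cyc (M.ψ.ρ b1 a1 x2) y2 y3).symm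
    linear_combination (norm := module) h + q1 - q2 + q3
  have hL11 : M.ψ.ρ (M.ρ.ρ y3 y1 b2) a1 x2 =
      M.ψ.ρ (M.ρ.ρ x2 y1 a1) b2 y3 + M.Lg.br y1 (M.ψ.ρ b2 a1 x2) y3
      + M.ψ.ρ b2 (M.ρ.ρ x2 y3 a1) y1 := by
    have h := M.mp2 y3 y1 x2 b2 a1
    have q1 := rho_swap_both M y3 x2 a1 b2 y1
    have q2 := rho_arg1_neg M y1 x2 a1 b2 y3
    have q3 := M.Lg.cyc y3 y1 (M.ψ.ρ b2 a1 x2)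
    linear_combination (norm := module) h + q1 - q2 + q3
  have hL12 : M.ψ.ρ (M.ρ.ρ y1 y2 b3) a1 x2 =
      M.ψ.ρ b3 (M.ρ.ρ x2 y1 a1) y2 + M.ψ.ρ (M.ρ.ρ x2 y2 a1) b3 y1
      + M.Lg.br y1 y2 (M.ψ.ρ b3 a1 x2) := by
    have h := M.mp2 y1 y2 x2 b3 a1
    have q1 := rho_swap_both M y1 x2 a1 b3 y2
    have q2 := rho_arg1_neg M y2 x2 a1 b3 y1
    linear_combination (norm := module) h + q1 - q2
  have hL6 : M.ψ.ρ a2 (M.ρ.ρ y2 y3 b1) x1 =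
      M.Lg.br (M.ψ.ρ a2 b1 x1) y2 y3 + M.ψ.ρ b1 (M.ρ.ρ y2 x1 a2) y3
      + M.ψ.ρ (M.ρ.ρ y3 x1 a2) b1 y2 := by
    have h := M.mp2 y2 y3 x1 b1 a2
    have e0 := M.ψ.skew'' a2 (M.ρ.ρ y2 y3 b1) x1
    have q1 := M.ψ.skew'' (M.ρ.ρ y2 x1 a2) b1 y3
    have q3 := br_psi_neg M y2 y3 b1 a2 x1
    have q4 := (M.Lg.cyc (M.ψ.ρ a2 b1 x1) y2 y3).symm
    linear_combination (norm := module) e0 - h - q1 - q3 + q4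
  have hL7 : M.ψ.ρ a2 (M.ρ.ρ y3 y1 b2) x1 =
      M.ψ.ρ (M.ρ.ρ y1 x1 a2) b2 y3 + M.Lg.br y1 (M.ψ.ρ a2 b2 x1) y3
      + M.ψ.ρ b2 (M.ρ.ρ y3 x1 a2) y1 := by
    have h := M.mp2 y3 y1 x1 b2 a2
    have e0 := M.ψ.skew'' a2 (M.ρ.ρ y3 y1 b2) x1
    have q1 := M.ψ.skew'' (M.ρ.ρ y3 x1 a2) b2 y1
    have q3 := br_psi_neg M y3 y1 b2 a2 x1
    have q4 := M.Lg.cyc y3 y1 (M.ψ.ρ a2 b2 x1)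
    linear_combination (norm := module) e0 - h - q1 - q3 + q4
  have hL8 : M.ψ.ρ a2 (M.ρ.ρ y1 y2 b3) x1 =
      M.ψ.ρ b3 (M.ρ.ρ y1 x1 a2) y2 + M.ψ.ρ (M.ρ.ρ y2 x1 a2) b3 y1
      + M.Lg.br y1 y2 (M.ψ.ρ a2 b3 x1) := by
    have h := M.mp2 y1 y2 x1 b3 a2
    have e0 := M.ψ.skew'' a2 (M.ρ.ρ y1 y2 b3) x1
    have q1 := M.ψ.skew'' (M.ρ.ρ y1 x1 a2) b3 y2
    have q3 := br_psi_neg M y1 y2 b3 a2 x1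
    linear_combination (norm := module) e0 - h - q1 - q3
  simp only [Bg, Bh, map_add, LinearMap.add_apply]
  linear_combination (norm := module) hL1 + hL2 + hL3 + hL4 + hL5 + hL6 + hL7 + hL8
    + hL9 + hL10 + hL11 + hL12 + hL13 + hL14 + hL15 + hL16

end BicrossAux

section BicrossAux2

variable {k g h : Type*} [CommRing k] [AddCommGroup g] [Module k g]
  [AddCommGroup h] [Module k h]

/-- The bicrossed-product bracket as a trilinear map. -/
def bicrossBr (M : MatchedPair k g h) :
    (g × h) →ₗ[k] (g × h) →ₗ[k] (g × h) →ₗ[k] (g × h) where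
  toFun p :=
  { toFun := fun q =>
    { toFun := fun r => (Bg M p.1 p.2 q.1 q.2 r.1 r.2, Bh M p.1 p.2 q.1 q.2 r.1 r.2)
      map_add' := by
        intro r r'
        simp only [Bg, Bh, Prod.fst_add, Prod.snd_add, map_add, LinearMap.add_apply,
          Prod.mk_add_mk]
        rw [Prod.mk.injEq]; constructor <;> abel
      map_smul' := by
        intro c r
        simp only [Bg, Bh, Prod.smul_fst, Prod.smul_snd, map_smul, LinearMap.smul_apply,
          RingHom.id_apply, Prod.smul_mk, smul_add]
      }
    map_add' := by
      intro q q'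
      refine LinearMap.ext fun r => ?_
      simp only [LinearMap.coe_mk, AddHom.coe_mk, LinearMap.add_apply, Bg, Bh,
        Prod.fst_add, Prod.snd_add, map_add, LinearMap.add_apply, Prod.mk_add_mk]
      rw [Prod.mk.injEq]; constructor <;> abel
    map_smul' := by
      intro c q
      refine LinearMap.ext fun r => ?_
      simp only [LinearMap.coe_mk, AddHom.coe_mk, LinearMap.smul_apply, Bg, Bh,
        Prod.smul_fst, Prod.smul_snd, map_smul, LinearMap.smul_apply,
        RingHom.id_apply, Prod.smul_mk, smul_add] }
  map_add' := by
    intro p p'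
    refine LinearMap.ext fun q => LinearMap.ext fun r => ?_
    simp only [LinearMap.coe_mk, AddHom.coe_mk, LinearMap.add_apply, Bg, Bh,
      Prod.fst_add, Prod.snd_add, map_add, LinearMap.add_apply, Prod.mk_add_mk]
    rw [Prod.mk.injEq]; constructor <;> abel
  map_smul' := by
    intro c p
    refine LinearMap.ext fun q => LinearMap.ext fun r => ?_
    simp only [LinearMap.coe_mk, AddHom.coe_mk, LinearMap.smul_apply, Bg, Bh,
      Prod.smul_fst, Prod.smul_snd, map_smul, LinearMap.smul_apply,
      RingHom.id_apply, Prod.smul_mk, smul_add]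

lemma bicrossBr_apply (M : MatchedPair k g h) (p q r : g × h) :
    bicrossBr M p q r = (Bg M p.1 p.2 q.1 q.2 r.1 r.2, Bh M p.1 p.2 q.1 q.2 r.1 r.2) :=
  rfl

/-- The bicrossed product 3-Lie algebra structure on `g × h`. -/
def bicrossThreeLie (M : MatchedPair k g h) : ThreeLie k (g × h) where
  br := bicrossBr M
  alt₁ := by
    intro p r
    rw [bicrossBr_apply, Prod.mk_eq_zero]
    constructor
    · show Bg M p.1 p.2 p.1 p.2 r.1 r.2 = 0
      rw [Bg, M.Lg.alt₁, M.ψ.skew'' p.2 r.2 p.1, M.ψ.skew_apply']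
      abel
    · show Bh M p.1 p.2 p.1 p.2 r.1 r.2 = 0
      rw [Bh, M.Lh.alt₁, M.ρ.skew'' p.1 r.1 p.2, M.ρ.skew_apply']
      abel
  alt₂ := by
    intro p q
    rw [bicrossBr_apply, Prod.mk_eq_zero]
    constructor
    · show Bg M p.1 p.2 q.1 q.2 q.1 q.2 = 0
      rw [Bg, M.Lg.alt₂, M.ψ.skew'' q.2 p.2 q.1, M.ψ.skew_apply']
      abel
    · show Bh M p.1 p.2 q.1 q.2 q.1 q.2 = 0
      rw [Bh, M.Lh.alt₂, M.ρ.skew'' q.1 p.1 q.2, M.ρ.skew_apply']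
      abel
  fund := by
    intro p1 p2 q1 q2 q3
    simp only [bicrossBr_apply, Prod.mk_add_mk]
    refine Prod.ext ?_ ?_
    · exact fundG M p1.1 p2.1 q1.1 q2.1 q3.1 p1.2 p2.2 q1.2 q2.2 q3.2
    · exact fundG M.swap p1.2 p2.2 q1.2 q2.2 q3.2 p1.1 p2.1 q1.1 q2.1 q3.1

end BicrossAux2


/-- The bicrossed product: for a matched pair of 3-Lie algebras
`(g, h, ρ, ψ)` over a field `k`, the direct sum `g ⊕ h` carries a 3-Lie algebra
structure with the bracket of Theorem 2.2 of arXiv:2508.14044. -/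
theorem bicrossed_product_threeLie
    {k : Type*} [Field k] {g h : Type*}
    [AddCommGroup g] [Module k g] [AddCommGroup h] [Module k h]
    (M : MatchedPair k g h) :
    ∃ L : ThreeLie k (g × h), ∀ p q r : g × h,
      L.br p q r =
        (M.Lg.br p.1 q.1 r.1 + M.ψ.ρ q.2 r.2 p.1 + M.ψ.ρ r.2 p.2 q.1
           + M.ψ.ρ p.2 q.2 r.1,
         M.Lh.br p.2 q.2 r.2 + M.ρ.ρ q.1 r.1 p.2 + M.ρ.ρ r.1 p.1 q.2
           + M.ρ.ρ p.1 q.1 r.2) := by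
  exact ⟨bicrossThreeLie M, fun p q r => rfl⟩
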